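/- If P and Q are symmetric positive definite real n×n matrices satisfying the Lyapunov equation AᵀP + PA = -Q, and PB = Cᵀ for matrices B ∈ ℝ^{n×m}, C ∈ ℝ^{m×n}, then for the function V(x, Θ) = xᵀPx + tr(Θ K Θᵀ) with K symmetric positive definite, along trajectories ẋ = Ax + BΘᵀη(t), Θ̇ᵀ = -K⁻¹ (Cx) ηᵀ(t), the time derivative of V equals -xᵀQx, which is ≤ 0. -/

import Mathlib

/-! Differentiating along trajectories, the quadratic part gives xᵀ(AᵀP + PA)x = -xᵀQx plus the
coupling term 2 ηᵀΘCx (because PB = Cᵀ), while the adaptation law turns the derivative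
2 tr(ΘKΘ̇ᵀ) of the parameter part into -2 tr(Θ (Cx) ηᵀ) = -2 ηᵀΘCx, so the coupling cancels. -/

open Matrix

section Algebra

variable {R : Type*} [CommSemiring R] {l ι κ : Type*} [Fintype ι] [Fintype κ]

theorem Matrix.IsSymm.dotProduct_mulVec_comm {M : Matrix ι ι R} (hM : M.IsSymm)
    (v w : ι → R) : v ⬝ᵥ M *ᵥ w = w ⬝ᵥ M *ᵥ v := by
  rw [dotProduct_mulVec, ← mulVec_transpose, hM, dotProduct_comm]

theorem Matrix.IsSymm.two_mul_dotProduct_mulVec_mulVec {P A : Matrix ι ι R} (hP : P.IsSymm)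
    (v : ι → R) : 2 * (v ⬝ᵥ P *ᵥ A *ᵥ v) = v ⬝ᵥ (Aᵀ * P + P * A) *ᵥ v := by
  rw [add_mulVec, dotProduct_add, ← mulVec_mulVec, ← mulVec_mulVec, two_mul,
    dotProduct_mulVec v Aᵀ, vecMul_transpose, hP.dotProduct_mulVec_comm]

theorem Matrix.trace_mul_mul_transpose [Fintype l] (Θ Ψ : Matrix l κ R) (K : Matrix κ κ R) :
    (Θ * K * Ψᵀ).trace = ∑ i, Θ i ⬝ᵥ K *ᵥ Ψ i := by
  refine Finset.sum_congr rfl fun i _ => ?_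
  rw [dotProduct_mulVec]
  rfl

theorem Matrix.trace_mul_vecMulVec [Fintype l] (Θ : Matrix l κ R) (c : κ → R) (e : l → R) :
    (Θ * vecMulVec c e).trace = e ⬝ᵥ Θ *ᵥ c := by
  rw [mul_vecMulVec, trace_vecMulVec, dotProduct_comm]

end Algebra

section Derivatives

variable {𝕜 : Type*} [NontriviallyNormedField 𝕜] {l ι κ : Type*} [Fintype ι] {t : 𝕜}

theorem HasDerivAt.dotProduct {u v : 𝕜 → ι → 𝕜} {u' v' : ι → 𝕜}
    (hu : HasDerivAt u u' t) (hv : HasDerivAt v v' t) :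
    HasDerivAt (fun s => u s ⬝ᵥ v s) (u' ⬝ᵥ v t + u t ⬝ᵥ v') t := by
  have h : HasDerivAt (fun s => ∑ i, u s i * v s i) (∑ i, (u' i * v t i + u t i * v' i)) t :=
    HasDerivAt.fun_sum fun i _ => (hasDerivAt_pi.mp hu i).fun_mul (hasDerivAt_pi.mp hv i)
  rwa [Finset.sum_add_distrib] at h

theorem HasDerivAt.mulVec {u : 𝕜 → ι → 𝕜} {u' : ι → 𝕜} (M : Matrix κ ι 𝕜)
    (hu : HasDerivAt u u' t) : HasDerivAt (fun s => M *ᵥ u s) (M *ᵥ u') t :=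
  hasDerivAt_pi.mpr fun i =>
    HasDerivAt.fun_sum fun j _ => (hasDerivAt_pi.mp hu j).const_mul (M i j)

theorem HasDerivAt.dotProduct_mulVec_self {u : 𝕜 → ι → 𝕜} {u' : ι → 𝕜}
    {M : Matrix ι ι 𝕜} (hM : M.IsSymm) (hu : HasDerivAt u u' t) :
    HasDerivAt (fun s => u s ⬝ᵥ M *ᵥ u s) (2 * (u t ⬝ᵥ M *ᵥ u')) t :=
  (hu.dotProduct (hu.mulVec M)).congr_deriv <| by rw [hM.dotProduct_mulVec_comm u', two_mul]

theorem HasDerivAt.trace_mul_mul_transpose [Fintype l] {Θ : 𝕜 → Matrix l ι 𝕜}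
    {Θ' : Matrix l ι 𝕜} {K : Matrix ι ι 𝕜} (hK : K.IsSymm)
    (hΘ : ∀ i j, HasDerivAt (fun s => Θ s i j) (Θ' i j) t) :
    HasDerivAt (fun s => (Θ s * K * (Θ s)ᵀ).trace) (2 * (Θ t * K * Θ'ᵀ).trace) t := by
  simp only [Matrix.trace_mul_mul_transpose, Finset.mul_sum]
  exact HasDerivAt.fun_sum fun i _ => (hasDerivAt_pi.mpr (hΘ i)).dotProduct_mulVec_self hK

end Derivatives

theorem stmt0_general {n m p : ℕ}
    (A : Matrix (Fin n) (Fin n) ℝ) (B : Matrix (Fin n) (Fin m) ℝ)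
    (C : Matrix (Fin m) (Fin n) ℝ) (P Q : Matrix (Fin n) (Fin n) ℝ)
    (K : Matrix (Fin m) (Fin m) ℝ)
    (hPsymm : P.IsSymm)
    (hQpd : Q.PosDef)
    (hKsymm : K.IsSymm) (hKpd : K.PosDef)
    (hLyap : Aᵀ * P + P * A = -Q) (hPB : P * B = Cᵀ)
    (x : ℝ → Fin n → ℝ) (x' : ℝ → Fin n → ℝ)
    (Θ Θ' : ℝ → Matrix (Fin p) (Fin m) ℝ) (η : ℝ → Fin p → ℝ)
    (hx : ∀ t i, HasDerivAt (fun s => x s i) (x' t i) t)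
    (hΘ : ∀ t i j, HasDerivAt (fun s => Θ s i j) (Θ' t i j) t)
    (hdyn : ∀ t, x' t = A.mulVec (x t) + B.mulVec ((Θ t)ᵀ.mulVec (η t)))
    (hadapt : ∀ t, (Θ' t)ᵀ = -(K⁻¹ * Matrix.vecMulVec (C.mulVec (x t)) (η t))) :
    ∀ t, HasDerivAt
        (fun s => x s ⬝ᵥ P.mulVec (x s) + (Θ s * K * (Θ s)ᵀ).trace)
        (-(x t ⬝ᵥ Q.mulVec (x t))) t
      ∧ -(x t ⬝ᵥ Q.mulVec (x t)) ≤ 0 := by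
  intro t
  have hcoupling : x t ⬝ᵥ P *ᵥ B *ᵥ (Θ t)ᵀ *ᵥ η t = η t ⬝ᵥ Θ t *ᵥ C *ᵥ x t := by
    rw [mulVec_mulVec, hPB, dotProduct_mulVec, vecMul_transpose, dotProduct_mulVec,
      vecMul_transpose, dotProduct_comm]
  have hadapt_trace : (Θ t * K * (Θ' t)ᵀ).trace = -(η t ⬝ᵥ Θ t *ᵥ C *ᵥ x t) := by
    rw [hadapt, Matrix.mul_neg, Matrix.mul_assoc,
      mul_nonsing_inv_cancel_left K _ ((isUnit_iff_isUnit_det K).mp hKpd.isUnit), trace_neg,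
      trace_mul_vecMulVec]
  have hV := ((hasDerivAt_pi.mpr (hx t)).dotProduct_mulVec_self hPsymm).add
    (HasDerivAt.trace_mul_mul_transpose hKsymm (hΘ t))
  have hQx : 0 ≤ x t ⬝ᵥ Q *ᵥ x t := by
    simpa using hQpd.posSemidef.dotProduct_mulVec_nonneg (x t)
  refine ⟨hV.congr_deriv ?_, neg_nonpos.mpr hQx⟩
  rw [hdyn, mulVec_add, dotProduct_add, mul_add, hPsymm.two_mul_dotProduct_mulVec_mulVec, hLyap,
    hcoupling, hadapt_trace]
  rw [neg_mulVec, dotProduct_neg]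
  ring

/-- Lyapunov stability for the adaptive system:
`V(x,Θ) = xᵀPx + tr(Θ K Θᵀ)` has derivative `-xᵀQx ≤ 0` along trajectories. -/
theorem stmt0 {n m p : ℕ}
    (A : Matrix (Fin n) (Fin n) ℝ) (B : Matrix (Fin n) (Fin m) ℝ)
    (C : Matrix (Fin m) (Fin n) ℝ) (P Q : Matrix (Fin n) (Fin n) ℝ)
    (K : Matrix (Fin m) (Fin m) ℝ)
    (hPsymm : P.IsSymm) (hPpd : P.PosDef)
    (hQsymm : Q.IsSymm) (hQpd : Q.PosDef)
    (hKsymm : K.IsSymm) (hKpd : K.PosDef)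
    (hLyap : Aᵀ * P + P * A = -Q) (hPB : P * B = Cᵀ)
    (x : ℝ → Fin n → ℝ) (x' : ℝ → Fin n → ℝ)
    (Θ Θ' : ℝ → Matrix (Fin p) (Fin m) ℝ) (η : ℝ → Fin p → ℝ)
    (hx : ∀ t i, HasDerivAt (fun s => x s i) (x' t i) t)
    (hΘ : ∀ t i j, HasDerivAt (fun s => Θ s i j) (Θ' t i j) t)
    (hdyn : ∀ t, x' t = A.mulVec (x t) + B.mulVec ((Θ t)ᵀ.mulVec (η t)))
    (hadapt : ∀ t, (Θ' t)ᵀ = -(K⁻¹ * Matrix.vecMulVec (C.mulVec (x t)) (η t))) :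
    ∀ t, HasDerivAt
        (fun s => x s ⬝ᵥ P.mulVec (x s) + (Θ s * K * (Θ s)ᵀ).trace)
        (-(x t ⬝ᵥ Q.mulVec (x t))) t
      ∧ -(x t ⬝ᵥ Q.mulVec (x t)) ≤ 0 :=
  stmt0_general A B C P Q K hPsymm hQpd hKsymm hKpd hLyap hPB x x' Θ Θ' η hx hΘ hdyn hadapt
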